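/- The map h : (C₀ × ℂ) → ℂ⁴ defined by h((0,t³,t⁵), a) = (a, t³, t⁵, a·t²) for t ≠ 0 and h((0,0,0), a) = (a,0,0,0), where C₀ = {(0,t³,t⁵) : t ∈ ℂ} ⊂ ℂ³, is a well-defined continuous bijection from C₀ × ℂ onto the image S of n(a,t) = (a,t³,t⁵,at²), whose inverse is also continuous; i.e., h is a homeomorphism exhibiting S as topologically trivial over the a-axis. -/

import Mathlib

/-!
On the cusp `C₀` the parameter `t²` is recovered from `(0, y, z) = (0, t³, t⁵)` as `z / y`, so
`h ((0, y, z), a) = (a, y, z, a * z / y)` with inverse `(a, y, z, w) ↦ ((0, y, z), a)`. The inverse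
is plainly continuous, and so is `z / y` on `C₀` away from the cusp point; at the cusp point it
is continuous because `‖t²‖ = ‖t³‖ ^ (2/3)` tends to `0`.
-/

open Filter Topology

/-- The special fiber C₀ = {(0,t³,t⁵) : t ∈ ℂ} ⊂ ℂ³ of the surface
S = {(a,t³,t⁵,a·t²) : a,t ∈ ℂ} ⊂ ℂ⁴. -/
def C₀ : Set (Fin 3 → ℂ) := {v | ∃ t : ℂ, v = ![0, t ^ 3, t ^ 5]}

/-- The surface S ⊂ ℂ⁴ parametrized by n(a,t) = (a, t³, t⁵, a·t²). -/
def Surf : Set (Fin 4 → ℂ) := {v | ∃ a t : ℂ, v = ![a, t ^ 3, t ^ 5, a * t ^ 2]}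

/-- At the cusp point the junk value `0 / 0 = 0` is the right one. -/
noncomputable def cuspSlope (v : Fin 3 → ℂ) : ℂ := v 2 / v 1

lemma cuspSlope_cusp (t : ℂ) : cuspSlope ![0, t ^ 3, t ^ 5] = t ^ 2 := by
  rcases eq_or_ne t 0 with rfl | ht
  · simp [cuspSlope]
  · simp only [cuspSlope, Matrix.cons_val, Matrix.cons_val_one, Matrix.cons_val_zero]
    field_simp

lemma norm_sq_eq_norm_cube_rpow {𝕜 : Type*} [NormedDivisionRing 𝕜] (t : 𝕜) :
    ‖t ^ 2‖ = ‖t ^ 3‖ ^ (2 / 3 : ℝ) := by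
  rw [norm_pow, norm_pow, ← Real.rpow_natCast, ← Real.rpow_natCast,
    ← Real.rpow_mul (norm_nonneg t)]
  norm_num

lemma continuousOn_cuspSlope : ContinuousOn cuspSlope C₀ := by
  rintro _ ⟨t, rfl⟩
  rcases eq_or_ne t 0 with rfl | ht
  · have hbound : Tendsto (fun w : Fin 3 → ℂ => ‖w 1‖ ^ (2 / 3 : ℝ))
        (𝓝 ![0, 0 ^ 3, 0 ^ 5]) (𝓝 0) := by
      have hcont : Continuous fun w : Fin 3 → ℂ => ‖w 1‖ ^ (2 / 3 : ℝ) :=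
        (continuous_apply 1).norm.rpow_const fun _ => Or.inr (by norm_num)
      convert hcont.tendsto _
      simp
    rw [ContinuousWithinAt, cuspSlope_cusp, zero_pow two_ne_zero]
    refine squeeze_zero_norm' ?_ (tendsto_nhdsWithin_of_tendsto_nhds hbound)
    filter_upwards [self_mem_nhdsWithin] with w hw
    obtain ⟨s, rfl⟩ := hw
    simpa [cuspSlope_cusp] using (norm_sq_eq_norm_cube_rpow s).le
  · have hden : (![0, t ^ 3, t ^ 5] : Fin 3 → ℂ) 1 ≠ 0 := by simpa using ht
    exact ((continuous_apply 2).continuousAt.div (continuous_apply 1).continuousAt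
      hden).continuousWithinAt

lemma cuspLift_mem_surf (p : C₀ × ℂ) :
    ![p.2, p.1.1 1, p.1.1 2, p.2 * cuspSlope p.1.1] ∈ Surf := by
  obtain ⟨⟨_, t, rfl⟩, a⟩ := p
  exact ⟨a, t, by simp [cuspSlope_cusp]⟩

lemma cusp_mem_of_mem_surf (s : Surf) : ![0, s.1 1, s.1 2] ∈ C₀ := by
  obtain ⟨_, a, t, rfl⟩ := s
  exact ⟨t, by simp⟩

noncomputable def cuspTrivialization : (C₀ × ℂ) ≃ₜ Surf where
  toFun p := ⟨_, cuspLift_mem_surf p⟩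
  invFun s := (⟨_, cusp_mem_of_mem_surf s⟩, s.1 0)
  left_inv := by
    rintro ⟨⟨_, t, rfl⟩, a⟩
    ext i
    · fin_cases i <;> rfl
    · rfl
  right_inv := by
    rintro ⟨_, a, t, rfl⟩
    ext i
    fin_cases i <;> simp [cuspSlope_cusp]
  continuous_toFun := by
    have hv : Continuous fun p : C₀ × ℂ => (p.1 : Fin 3 → ℂ) :=
      continuous_subtype_val.comp continuous_fst
    have hslope : Continuous fun p : C₀ × ℂ => cuspSlope p.1 :=
      continuousOn_cuspSlope.comp_continuous hv fun p => p.1.2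
    refine .subtype_mk (continuous_pi fun i => ?_) _
    fin_cases i
    exacts [continuous_snd, (continuous_apply (1 : Fin 3)).comp hv,
      (continuous_apply (2 : Fin 3)).comp hv, continuous_snd.mul hslope]
  continuous_invFun := by
    have hw (i : Fin 4) : Continuous fun s : Surf => (s : Fin 4 → ℂ) i :=
      (continuous_apply i).comp continuous_subtype_val
    refine .prodMk (.subtype_mk (continuous_pi fun i => ?_) _) (hw 0)
    fin_cases i
    exacts [continuous_const, hw 1, hw 2]

/-- The map h : C₀ × ℂ → S, ((0,t³,t⁵), a) ↦ (a, t³, t⁵, a·t²), is a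
well-defined homeomorphism onto S which commutes with the projections to the
a-coordinate: S is topologically trivial over the a-axis. -/
theorem topologically_trivial_family :
    ∃ h : (C₀ × ℂ) ≃ₜ Surf,
      (∀ (t a : ℂ),
        (h (⟨![0, t ^ 3, t ^ 5], ⟨t, rfl⟩⟩, a) : Fin 4 → ℂ)
          = ![a, t ^ 3, t ^ 5, a * t ^ 2]) ∧
      (∀ p : C₀ × ℂ, (h p : Fin 4 → ℂ) 0 = p.2) :=
  ⟨cuspTrivialization, fun t a => by simp [cuspTrivialization, cuspSlope_cusp], fun _ => rfl⟩
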